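/- Under the CBO setup, if γ ∈ (0,1), ξ > 0 and N ∈ ℕ are such that θ < 1, then for every s = 1,…,d: (i) lim_{k→∞} E[diam(y_k^s)] = 0; (ii) diam(y_k^s) → 0 almost surely as k → ∞; and (iii) max_{i,j=1:N} ‖x_k^i − x_k^j‖_∞ → 0 almost surely as k → ∞, where ‖·‖_∞ is the maximum norm on ℝ^d. -/

import Mathlib

open MeasureTheory ProbabilityTheory
open scoped RealInnerProductSpace

noncomputable section

/-- The diameter of a vector `y ∈ ℝ^N`: `max_i y_i - min_i y_i`. -/
def vdiam {N : ℕ} (y : Fin N → ℝ) : ℝ := (⨆ i, y i) - (⨅ i, y i)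

/-- Data of the discrete consensus-based optimization (CBO) method with noisy objective
function: drift parameter `γ`, noise level `ξ`, weight parameter `α`, particle positions
`x k i : Ω → ℝ^d`, diffusion noises `η k s i : Ω → ℝ`, and the values `fhat k i : Ω → ℝ`
returned by the stochastic oracle (i.e. `f̂(x_k^i, ω_k^i)`). -/
structure CBOData (N d : ℕ) (Ω : Type) [MeasurableSpace Ω] where
  γ : ℝ
  ξ : ℝ
  α : ℝ
  x : ℕ → Fin N → Ω → EuclideanSpace ℝ (Fin d)
  η : ℕ → Fin d → Fin N → Ω → ℝ
  fhat : ℕ → Fin N → Ω → ℝ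

namespace CBOData

variable {N d : ℕ} {Ω : Type} [MeasurableSpace Ω]

/-- The noisy consensus point
`x̂_k^α = (Σ_i x_k^i e^{-α f̂(x_k^i, ω_k^i)}) / (Σ_i e^{-α f̂(x_k^i, ω_k^i)})`. -/
def xhat (C : CBOData N d Ω) (k : ℕ) (ω : Ω) : EuclideanSpace ℝ (Fin d) :=
  (∑ i, Real.exp (-C.α * C.fhat k i ω))⁻¹ •
    ∑ i, Real.exp (-C.α * C.fhat k i ω) • C.x k i ω

/-- The vector of `s`-th components of the particles: `y_k^s = (x_{k,s}^1, …, x_{k,s}^N)`. -/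
def y (C : CBOData N d Ω) (k : ℕ) (s : Fin d) (ω : Ω) : Fin N → ℝ :=
  fun i => C.x k i ω s

/-- The contraction constant `θ = 1 - γ + 8 ξ (log(√2 N))^{1/2}`. -/
def th (C : CBOData N d Ω) : ℝ :=
  1 - C.γ + 8 * C.ξ * Real.sqrt (Real.log (Real.sqrt 2 * N))

/-- The σ-algebra generated by the noises of iteration `k`. -/
def noiseσ (C : CBOData N d Ω) (k : ℕ) : MeasurableSpace Ω :=
  ⨆ s : Fin d, ⨆ i : Fin N, MeasurableSpace.comap (C.η k s i) inferInstance

/-- The σ-algebra generated by the particle positions and the oracle evaluations up to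
iteration `k`, together with the noises of iterations `< k`. -/
def histσ (C : CBOData N d Ω) (k : ℕ) : MeasurableSpace Ω :=
  ((⨆ (l : ℕ) (_ : l ≤ k), ⨆ i : Fin N,
      (MeasurableSpace.comap (C.x l i) inferInstance ⊔
        MeasurableSpace.comap (C.fhat l i) inferInstance)) ⊔
    ⨆ (l : ℕ) (_ : l < k), ⨆ s : Fin d, ⨆ i : Fin N,
      MeasurableSpace.comap (C.η l s i) inferInstance)

/-- `σ_k`: the σ-algebra generated by `{x_l^i : l ≤ k}` and `{η_{l,s}^i : l ≤ k}`. -/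
def sigmak (C : CBOData N d Ω) (k : ℕ) : MeasurableSpace Ω :=
  ((⨆ (l : ℕ) (_ : l ≤ k), ⨆ i : Fin N,
      MeasurableSpace.comap (C.x l i) inferInstance) ⊔
    ⨆ (l : ℕ) (_ : l ≤ k), ⨆ s : Fin d, ⨆ i : Fin N,
      MeasurableSpace.comap (C.η l s i) inferInstance)

/-- The hypotheses of the CBO setup: `N, d ≥ 1`, `γ ∈ (0,1)`, `ξ > 0`, `α > 0`,
measurability of all the random variables, the noises are i.i.d. centered Gaussian with
variance `ξ²` and, at each iteration `k`, the family of iteration-`k` noises is independent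
of the particle positions and oracle evaluations up to iteration `k`; finally the particles
evolve according to the (componentwise) CBO update rule. -/
structure Hyp (C : CBOData N d Ω) (P : Measure Ω) : Prop where
  hN : 1 ≤ N
  hd : 1 ≤ d
  hγ : C.γ ∈ Set.Ioo (0:ℝ) 1
  hξ : 0 < C.ξ
  hα : 0 < C.α
  meas_x : ∀ k i, Measurable (C.x k i)
  meas_η : ∀ k s i, Measurable (C.η k s i)
  meas_fhat : ∀ k i, Measurable (C.fhat k i)
  η_gauss : ∀ k s i, Measure.map (C.η k s i) P = gaussianReal 0 ⟨C.ξ ^ 2, sq_nonneg C.ξ⟩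
  η_iid : iIndepFun
    (fun p : ℕ × Fin d × Fin N => C.η p.1 p.2.1 p.2.2) P
  η_indep_hist : ∀ k, Indep (C.noiseσ k) (C.histσ k) P
  evol : ∀ k i s ω, C.x (k+1) i ω s =
    C.x k i ω s - C.γ * (C.x k i ω s - C.xhat k ω s)
      - (C.x k i ω s - C.xhat k ω s) * C.η k s i ω

end CBOData

open Filter

/-!
The consensus point is a weighted mean of the particles, so each of its coordinates lies between
the smallest and the largest coordinate of the particles. Hence one step multiplies the diameter
of every coordinate vector by at most `1 - γ + 2 maxᵢ |η_{k,s}^i|`, a factor independent of the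
current diameter. By Jensen's inequality for `exp (t maxᵢ |ηᵢ|)`, the expected maximum of `N`
centred Gaussians of variance `ξ²` is at most `ξ √(2 log 2N) ≤ 2ξ √(log (√2 N))`, so the expected
diameter decays at least like `θᵏ`. The expectations are summable, which forces almost sure
convergence, and the max-norm spread of the particles is bounded by the sum of the coordinate
diameters.
-/

open Real Topology
open scoped NNReal

section Diameter

variable {n : ℕ}

theorem measurable_vdiam : Measurable (vdiam : (Fin n → ℝ) → ℝ) :=
  (Measurable.iSup fun i => measurable_pi_apply i).sub
    (Measurable.iInf fun i => measurable_pi_apply i)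

theorem sub_le_vdiam (y : Fin n → ℝ) (i j : Fin n) : y i - y j ≤ vdiam y := by
  have := le_ciSup (Set.finite_range y).bddAbove i
  have := ciInf_le (Set.finite_range y).bddBelow j
  unfold vdiam
  linarith

theorem abs_sub_le_vdiam (y : Fin n → ℝ) (i j : Fin n) : |y i - y j| ≤ vdiam y :=
  abs_sub_le_iff.2 ⟨sub_le_vdiam y i j, sub_le_vdiam y j i⟩

theorem vdiam_nonneg (y : Fin n → ℝ) : 0 ≤ vdiam y := by
  rcases isEmpty_or_nonempty (Fin n) with h | ⟨⟨i⟩⟩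
  · simp [vdiam]
  · simpa using sub_le_vdiam y i i

theorem vdiam_le [Nonempty (Fin n)] {y : Fin n → ℝ} {c : ℝ} (h : ∀ i j, y i - y j ≤ c) :
    vdiam y ≤ c := by
  obtain ⟨i, hi⟩ := exists_eq_ciSup_of_finite (f := y)
  obtain ⟨j, hj⟩ := exists_eq_ciInf_of_finite (f := y)
  rw [vdiam, ← hi, ← hj]
  exact h i j

theorem abs_sub_le_vdiam_of_mem_Icc {y : Fin n → ℝ} {c : ℝ}
    (hc : c ∈ Set.Icc (⨅ i, y i) (⨆ i, y i)) (i : Fin n) : |y i - c| ≤ vdiam y := by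
  have := le_ciSup (Set.finite_range y).bddAbove i
  have := ciInf_le (Set.finite_range y).bddBelow i
  rw [abs_le, vdiam]
  constructor <;> linarith [hc.1, hc.2]

theorem inv_sum_mul_sum_mul_mem_Icc [Nonempty (Fin n)] {w : Fin n → ℝ} (hw : ∀ i, 0 < w i)
    (y : Fin n → ℝ) : (∑ i, w i)⁻¹ * ∑ i, w i * y i ∈ Set.Icc (⨅ i, y i) (⨆ i, y i) := by
  have hsum : 0 < ∑ i, w i := Finset.sum_pos (fun i _ => hw i) Finset.univ_nonempty
  rw [Set.mem_Icc, le_inv_mul_iff₀ hsum, inv_mul_le_iff₀ hsum, Finset.sum_mul, Finset.sum_mul]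
  constructor <;> refine Finset.sum_le_sum fun i _ => mul_le_mul_of_nonneg_left ?_ (hw i).le
  exacts [ciInf_le (Set.finite_range y).bddBelow i, le_ciSup (Set.finite_range y).bddAbove i]

theorem vdiam_consensus_step_le [Nonempty (Fin n)] {y y' e : Fin n → ℝ} {γ c m : ℝ}
    (hγ : γ ≤ 1) (hc : c ∈ Set.Icc (⨅ i, y i) (⨆ i, y i)) (he : ∀ i, |e i| ≤ m)
    (hy' : ∀ i, y' i = y i - γ * (y i - c) - (y i - c) * e i) :
    vdiam y' ≤ (1 - γ + 2 * m) * vdiam y := by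
  have hnoise : ∀ i, |(y i - c) * e i| ≤ vdiam y * m := fun i => by
    rw [abs_mul]
    exact mul_le_mul (abs_sub_le_vdiam_of_mem_Icc hc i) (he i) (abs_nonneg _) (vdiam_nonneg y)
  refine vdiam_le fun i j => ?_
  have hdrift : (1 - γ) * (y i - y j) ≤ (1 - γ) * vdiam y :=
    mul_le_mul_of_nonneg_left (sub_le_vdiam y i j) (by linarith)
  rw [hy', hy']
  linarith [neg_abs_le ((y i - c) * e i), le_abs_self ((y j - c) * e j), hnoise i, hnoise j]

theorem iSup_iSup_iSup_abs_sub_le_sum_vdiam {d : ℕ} (x : Fin n → Fin d → ℝ) :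
    ⨆ i, ⨆ j, ⨆ s, |x i s - x j s| ≤ ∑ s, vdiam (fun i => x i s) := by
  have hsum : 0 ≤ ∑ s, vdiam (fun i => x i s) := Finset.sum_nonneg fun s _ => vdiam_nonneg _
  refine Real.iSup_le (fun i => Real.iSup_le (fun j => Real.iSup_le (fun s => ?_) hsum) hsum) hsum
  exact (abs_sub_le_vdiam (fun i => x i s) i j).trans
    (Finset.single_le_sum (f := fun t => vdiam fun i => x i t) (fun t _ => vdiam_nonneg _)
      (Finset.mem_univ s))

end Diameter

theorem le_sqrt_of_forall_pos_mul_le {a v L : ℝ} (hv : 0 < v)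
    (h : ∀ t > 0, t * a ≤ L + v * t ^ 2 / 2) : a ≤ √(2 * v * L) := by
  rcases le_or_gt a 0 with ha | ha
  · exact ha.trans (sqrt_nonneg _)
  rw [le_sqrt' ha]
  -- the optimal choice `t = a / v`
  have := h (a / v) (div_pos ha hv)
  have key : a ^ 2 / (2 * v) ≤ L := by
    field_simp at this ⊢
    nlinarith
  rwa [div_le_iff₀ (by positivity), mul_comm] at key

theorem sqrt_two_mul_sq_mul_log_two_mul_le {ξ : ℝ} (hξ : 0 ≤ ξ) {N : ℕ} (hN : 1 ≤ N) :
    √(2 * ξ ^ 2 * log (2 * N)) ≤ 2 * ξ * √(log (√2 * N)) := by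
  have hN' : (1 : ℝ) ≤ N := by exact_mod_cast hN
  have hlog : log (2 * N) ≤ 2 * log (√2 * N) := by
    rw [← log_rpow (by positivity), Real.rpow_two, mul_pow, sq_sqrt zero_le_two]
    exact log_le_log (by positivity) (by nlinarith)
  calc √(2 * ξ ^ 2 * log (2 * N)) ≤ √((2 * ξ) ^ 2 * log (√2 * N)) :=
        sqrt_le_sqrt (by nlinarith [sq_nonneg ξ])
    _ = 2 * ξ * √(log (√2 * N)) := by
        rw [sqrt_mul (sq_nonneg _), sqrt_sq (by positivity)]

section Probability

variable {Ω : Type*} [MeasurableSpace Ω] {P : Measure Ω}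

theorem integral_le_log_integral_exp [IsProbabilityMeasure P] {X : Ω → ℝ} (hX : Integrable X P)
    (hexp : Integrable (fun ω => exp (X ω)) P) : ∫ ω, X ω ∂P ≤ log (∫ ω, exp (X ω) ∂P) := by
  rw [le_log_iff_exp_le (integral_exp_pos hexp)]
  exact convexOn_exp.map_integral_le continuousOn_exp isClosed_univ (by simp) hX hexp

theorem mul_integral_le_log_integral_of_exp_mul_le [IsProbabilityMeasure P] {M Z : Ω → ℝ}
    (hM : Integrable M P) (hZ : Integrable Z P) {t : ℝ} (hMZ : ∀ ω, exp (t * M ω) ≤ Z ω) :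
    t * ∫ ω, M ω ∂P ≤ log (∫ ω, Z ω ∂P) := by
  have hexp : Integrable (fun ω => exp (t * M ω)) P :=
    hZ.mono' (continuous_exp.comp_aestronglyMeasurable (hM.1.const_mul t))
      (ae_of_all _ fun ω => by rw [norm_of_nonneg (exp_pos _).le]; exact hMZ ω)
  calc t * ∫ ω, M ω ∂P = ∫ ω, t * M ω ∂P := (integral_const_mul t M).symm
    _ ≤ log (∫ ω, exp (t * M ω) ∂P) := integral_le_log_integral_exp (hM.const_mul t) hexp
    _ ≤ log (∫ ω, Z ω ∂P) := log_le_log (integral_exp_pos hexp) (integral_mono hexp hZ hMZ)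

theorem exp_mul_abs_le (t x : ℝ) : exp (t * |x|) ≤ exp (t * x) + exp (-t * x) := by
  rcases abs_cases x with ⟨h, _⟩ | ⟨h, _⟩ <;> rw [h]
  · exact le_add_of_nonneg_right (exp_pos _).le
  · rw [mul_neg, ← neg_mul]
    exact le_add_of_nonneg_left (exp_pos _).le

theorem integrable_iSup_abs_and_integral_le_of_gaussian [IsProbabilityMeasure P] {ι : Type*}
    [Fintype ι] [Nonempty ι] {η : ι → Ω → ℝ} (hη : ∀ i, Measurable (η i)) {v : ℝ≥0}
    (hv : v ≠ 0) (hmap : ∀ i, P.map (η i) = gaussianReal 0 v) :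
    Integrable (fun ω => ⨆ i, |η i ω|) P ∧
      ∫ ω, ⨆ i, |η i ω| ∂P ≤ √(2 * v * log (2 * Fintype.card ι)) := by
  set M : Ω → ℝ := fun ω => ⨆ i, |η i ω|
  set Z : ℝ → Ω → ℝ := fun t ω => ∑ i, (exp (t * η i ω) + exp (-t * η i ω))
  have hexp : ∀ i t, Integrable (fun ω => exp (t * η i ω)) P := fun i t =>
    mgf_pos_iff.1 (by rw [mgf_gaussianReal (hmap i)]; exact exp_pos _)
  have hZ : ∀ t, Integrable (Z t) P := fun t =>
    integrable_finsetSum _ fun i _ => (hexp i t).add (hexp i (-t))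
  have hZ_integral : ∀ t, ∫ ω, Z t ω ∂P = 2 * Fintype.card ι * exp (v * t ^ 2 / 2) := fun t => by
    have hmgf := fun i s => mgf_gaussianReal (hmap i) s
    simp only [mgf] at hmgf
    rw [integral_finsetSum (f := fun i ω => exp (t * η i ω) + exp (-t * η i ω)) _
      fun i _ => (hexp i t).add (hexp i (-t))]
    simp only [integral_add (hexp _ t) (hexp _ (-t)), hmgf, Finset.sum_const, Finset.card_univ,
      nsmul_eq_mul]
    ring_nf
  have hMZ : ∀ t ω, exp (t * M ω) ≤ Z t ω := fun t ω => by
    obtain ⟨i, hi⟩ := exists_eq_ciSup_of_finite (f := fun i => |η i ω|)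
    simp only [M, ← hi]
    exact (exp_mul_abs_le t (η i ω)).trans
      (Finset.single_le_sum (f := fun i => exp (t * η i ω) + exp (-t * η i ω))
        (fun i _ => by positivity) (Finset.mem_univ i))
  have hM : Integrable M P := by
    refine (hZ 1).mono' (Measurable.iSup fun i => (hη i).abs).aestronglyMeasurable
      (ae_of_all _ fun ω => ?_)
    rw [norm_of_nonneg (Real.iSup_nonneg fun i => abs_nonneg _)]
    linarith [add_one_le_exp (M ω), one_mul (M ω) ▸ hMZ 1 ω]
  refine ⟨hM, le_sqrt_of_forall_pos_mul_le (NNReal.coe_pos.2 (pos_iff_ne_zero.2 hv))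
    fun t _ => ?_⟩
  have := mul_integral_le_log_integral_of_exp_mul_le hM (hZ t) (hMZ t)
  rwa [hZ_integral, log_mul (by positivity) (exp_pos _).ne', log_exp] at this

theorem indepFun_of_indep_of_measurable {m₁ m₂ : MeasurableSpace Ω} (h : Indep m₁ m₂ P)
    {f g : Ω → ℝ} (hf : Measurable[m₁] f) (hg : Measurable[m₂] g) : IndepFun f g P := by
  rw [IndepFun_iff_Indep]
  exact indep_of_indep_of_le_right (indep_of_indep_of_le_left h (measurable_iff_comap_le.1 hf))
    (measurable_iff_comap_le.1 hg)

theorem IndepFun.integrable_and_integral_le_of_le_mul {G X Y : Ω → ℝ} (hGX : IndepFun G X P)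
    (hG : Integrable G P) (hX : Integrable X P) (hX0 : ∀ ω, 0 ≤ X ω)
    (hY : AEStronglyMeasurable Y P) (hY0 : ∀ ω, 0 ≤ Y ω) (hYGX : ∀ ω, Y ω ≤ G ω * X ω)
    {c : ℝ} (hGc : ∫ ω, G ω ∂P ≤ c) :
    Integrable Y P ∧ ∫ ω, Y ω ∂P ≤ c * ∫ ω, X ω ∂P := by
  have hGXint : Integrable (fun ω => G ω * X ω) P := hGX.integrable_mul hG hX
  have hYint : Integrable Y P := hGXint.mono' hY
    (ae_of_all _ fun ω => by rw [norm_of_nonneg (hY0 ω)]; exact hYGX ω)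
  refine ⟨hYint, ?_⟩
  calc ∫ ω, Y ω ∂P ≤ ∫ ω, G ω * X ω ∂P := integral_mono hYint hGXint hYGX
    _ = (∫ ω, G ω ∂P) * ∫ ω, X ω ∂P :=
        hGX.integral_fun_mul_eq_mul_integral hG.aestronglyMeasurable hX.aestronglyMeasurable
    _ ≤ c * ∫ ω, X ω ∂P := mul_le_mul_of_nonneg_right hGc (integral_nonneg hX0)

theorem ae_tendsto_zero_of_summable_integral {f : ℕ → Ω → ℝ} (hf : ∀ k, Integrable (f k) P)
    (hf0 : ∀ k ω, 0 ≤ f k ω) (hsum : Summable fun k => ∫ ω, f k ω ∂P) :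
    ∀ᵐ ω ∂P, Tendsto (fun k => f k ω) atTop (𝓝 0) := by
  have hlintegral : ∫⁻ ω, ∑' k, ENNReal.ofReal (f k ω) ∂P ≠ ⊤ := by
    rw [lintegral_tsum fun k => (hf k).aemeasurable.ennreal_ofReal]
    simp_rw [← ofReal_integral_eq_lintegral_ofReal (hf _) (ae_of_all _ (hf0 _))]
    rw [← ENNReal.ofReal_tsum_of_nonneg (fun k => integral_nonneg (hf0 k)) hsum]
    exact ENNReal.ofReal_ne_top
  filter_upwards [ae_lt_top' (AEMeasurable.tsum fun k =>
    (hf k).aemeasurable.ennreal_ofReal) hlintegral] with ω hω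
  have := (ENNReal.summable_toReal hω.ne).tendsto_atTop_zero
  simpa only [ENNReal.toReal_ofReal (hf0 _ ω)] using this

end Probability

namespace CBOData

variable {N d : ℕ} {Ω : Type} [MeasurableSpace Ω] (C : CBOData N d Ω)

def contractionFactor (k : ℕ) (s : Fin d) (ω : Ω) : ℝ :=
  1 - C.γ + 2 * ⨆ i, |C.η k s i ω|

theorem xhat_apply (k : ℕ) (ω : Ω) (s : Fin d) :
    C.xhat k ω s = (∑ i, exp (-C.α * C.fhat k i ω))⁻¹ *
      ∑ i, exp (-C.α * C.fhat k i ω) * C.y k s ω i := by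
  simp [xhat, y, WithLp.ofLp_sum, Finset.sum_apply]

theorem xhat_mem_Icc [Nonempty (Fin N)] (k : ℕ) (ω : Ω) (s : Fin d) :
    C.xhat k ω s ∈ Set.Icc (⨅ i, C.y k s ω i) (⨆ i, C.y k s ω i) := by
  rw [xhat_apply]
  exact inv_sum_mul_sum_mul_mem_Icc (fun i => exp_pos _) _

variable {C} {P : Measure Ω}

theorem Hyp.vdiam_y_succ_le (hC : C.Hyp P) (k : ℕ) (s : Fin d) (ω : Ω) :
    vdiam (C.y (k + 1) s ω) ≤ C.contractionFactor k s ω * vdiam (C.y k s ω) :=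
  have : Nonempty (Fin N) := Fin.pos_iff_nonempty.1 hC.hN
  vdiam_consensus_step_le hC.hγ.2.le (C.xhat_mem_Icc k ω s)
    (fun i => le_ciSup (f := fun i => |C.η k s i ω|) (Set.finite_range _).bddAbove i)
    (fun i => hC.evol k i s ω)

theorem Hyp.measurable_y (hC : C.Hyp P) (k : ℕ) (s : Fin d) : Measurable (C.y k s) :=
  measurable_pi_lambda _ fun i =>
    (measurable_pi_apply s).comp ((WithLp.measurable_ofLp 2 _).comp (hC.meas_x k i))

theorem measurable_y_histσ (k : ℕ) (s : Fin d) : Measurable[C.histσ k] (C.y k s) := by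
  refine @measurable_pi_lambda Ω (Fin N) (fun _ => ℝ) (C.histσ k) _ _ fun i => ?_
  have hx : Measurable[C.histσ k] (C.x k i) := measurable_iff_comap_le.2 <|
    le_sup_of_le_left (le_iSup₂_of_le k le_rfl (le_iSup_of_le i le_sup_left))
  exact (measurable_pi_apply s).comp ((WithLp.measurable_ofLp 2 _).comp hx)

theorem measurable_contractionFactor_noiseσ (k : ℕ) (s : Fin d) :
    Measurable[C.noiseσ k] (C.contractionFactor k s) := by
  have hη : ∀ i, Measurable[C.noiseσ k] (C.η k s i) := fun i =>
    measurable_iff_comap_le.2 (le_iSup₂_of_le s i le_rfl)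
  exact ((Measurable.iSup fun i => measurable_abs.comp (hη i)).const_mul 2).const_add _

theorem Hyp.th_nonneg (hC : C.Hyp P) : 0 ≤ C.th := by
  have : 0 ≤ C.ξ * √(log (√2 * N)) := mul_nonneg hC.hξ.le (sqrt_nonneg _)
  rw [th]
  linarith [hC.hγ.2]

theorem Hyp.indepFun_contractionFactor_vdiam (hC : C.Hyp P) (k : ℕ) (s : Fin d) :
    IndepFun (C.contractionFactor k s) (fun ω => vdiam (C.y k s ω)) P :=
  indepFun_of_indep_of_measurable (hC.η_indep_hist k) (measurable_contractionFactor_noiseσ k s)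
    (measurable_vdiam.comp (measurable_y_histσ k s))

theorem Hyp.integrable_and_integral_contractionFactor_le [IsProbabilityMeasure P]
    (hC : C.Hyp P) (k : ℕ) (s : Fin d) :
    Integrable (C.contractionFactor k s) P ∧ ∫ ω, C.contractionFactor k s ω ∂P ≤ C.th := by
  have : Nonempty (Fin N) := Fin.pos_iff_nonempty.1 hC.hN
  have hv : (⟨C.ξ ^ 2, sq_nonneg C.ξ⟩ : ℝ≥0) ≠ 0 := ne_of_gt (pow_pos hC.hξ 2)
  obtain ⟨hint, hle⟩ :=
    integrable_iSup_abs_and_integral_le_of_gaussian (hC.meas_η k s) hv (hC.η_gauss k s)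
  replace hle : ∫ ω, ⨆ i, |C.η k s i ω| ∂P ≤ √(2 * C.ξ ^ 2 * log (2 * N)) :=
    hle.trans_eq (by rw [Fintype.card_fin]; rfl)
  have hξ_sqrt := sqrt_two_mul_sq_mul_log_two_mul_le hC.hξ.le hC.hN
  have : 0 ≤ C.ξ * √(log (√2 * N)) := mul_nonneg hC.hξ.le (sqrt_nonneg _)
  refine ⟨(integrable_const _).add (hint.const_mul 2), ?_⟩
  simp only [contractionFactor]
  rw [integral_add (integrable_const _) (hint.const_mul 2), integral_const,
    integral_const_mul, probReal_univ, one_smul, th]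
  linarith

theorem Hyp.integral_vdiam_le [IsProbabilityMeasure P] (hC : C.Hyp P) {s : Fin d}
    (hint : Integrable (fun ω => vdiam (C.y 0 s ω)) P) (k : ℕ) :
    Integrable (fun ω => vdiam (C.y k s ω)) P ∧
      ∫ ω, vdiam (C.y k s ω) ∂P ≤ C.th ^ k * ∫ ω, vdiam (C.y 0 s ω) ∂P := by
  induction k with
  | zero => simpa using hint
  | succ k ih =>
    obtain ⟨hfactor_int, hfactor_le⟩ := hC.integrable_and_integral_contractionFactor_le k s
    obtain ⟨hint', hle'⟩ := IndepFun.integrable_and_integral_le_of_le_mul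
      (hC.indepFun_contractionFactor_vdiam k s) hfactor_int ih.1 (fun ω => vdiam_nonneg _)
      (measurable_vdiam.comp (hC.measurable_y (k + 1) s)).aestronglyMeasurable
      (fun ω => vdiam_nonneg _) (hC.vdiam_y_succ_le k s) hfactor_le
    refine ⟨hint', hle'.trans ?_⟩
    rw [pow_succ', mul_assoc]
    exact mul_le_mul_of_nonneg_left ih.2 hC.th_nonneg

end CBOData

/-- Under the CBO setup, if `θ < 1` then for every component `s`:
(i) `E[diam(y_k^s)] → 0`; (ii) `diam(y_k^s) → 0` a.s.;
(iii) `max_{i,j} ‖x_k^i - x_k^j‖_∞ → 0` a.s. (maximum norm on `ℝ^d`). -/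
theorem stmt7 {N d : ℕ} {Ω : Type} [MeasurableSpace Ω] (P : Measure Ω)
    [IsProbabilityMeasure P] (C : CBOData N d Ω) (hC : C.Hyp P)
    (hint : ∀ s : Fin d, Integrable (fun ω => vdiam (C.y 0 s ω)) P)
    (hθ : C.th < 1) :
    (∀ s : Fin d,
        Tendsto (fun k => ∫ ω, vdiam (C.y k s ω) ∂P) atTop (nhds 0)) ∧
      (∀ s : Fin d, ∀ᵐ ω ∂P,
        Tendsto (fun k => vdiam (C.y k s ω)) atTop (nhds 0)) ∧
      (∀ᵐ ω ∂P,
        Tendsto (fun k => ⨆ i : Fin N, ⨆ j : Fin N, ⨆ s : Fin d,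
          |C.x k i ω s - C.x k j ω s|) atTop (nhds 0)) := by
  have hmean := fun s => hC.integral_vdiam_le (hint s)
  have hmean_nonneg : ∀ s k, 0 ≤ ∫ ω, vdiam (C.y k s ω) ∂P := fun s k =>
    integral_nonneg fun ω => vdiam_nonneg _
  have hgeom := tendsto_pow_atTop_nhds_zero_of_lt_one hC.th_nonneg hθ
  have hi : ∀ s : Fin d, Tendsto (fun k => ∫ ω, vdiam (C.y k s ω) ∂P) atTop (𝓝 0) := fun s =>
    squeeze_zero (hmean_nonneg s) (fun k => (hmean s k).2) (by simpa using hgeom.mul_const _)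
  have hii : ∀ s : Fin d, ∀ᵐ ω ∂P, Tendsto (fun k => vdiam (C.y k s ω)) atTop (𝓝 0) := fun s =>
    ae_tendsto_zero_of_summable_integral (fun k => (hmean s k).1) (fun k ω => vdiam_nonneg _)
      (((summable_geometric_of_lt_one hC.th_nonneg hθ).mul_right _).of_nonneg_of_le
        (hmean_nonneg s) fun k => (hmean s k).2)
  refine ⟨hi, hii, ?_⟩
  filter_upwards [ae_all_iff.2 hii] with ω hω
  have hsum := tendsto_finsetSum Finset.univ fun s _ => hω s
  rw [Finset.sum_const_zero] at hsum
  exact squeeze_zero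
    (fun k => Real.iSup_nonneg fun i => Real.iSup_nonneg fun j => Real.iSup_nonneg fun s =>
      abs_nonneg _)
    (fun k => iSup_iSup_iSup_abs_sub_le_sum_vdiam fun i => C.x k i ω) hsum
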